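/- arXiv:math/0301350 — 3 statements merged into one kernel-verified Lean document; each statement's English description precedes it below -/
import Mathlib

section
/- For λ ∈ Γ₂⁺ ⊂ ℝ⁴ and any t ≤ 1, the linear transformation L^t(λ) with eigenvalues (σ₁(λ) − λᵢ) + ((1−t)/2)·Σⱼ(σ₁(λ) − λⱼ) is positive definite, i.e., all its eigenvalues are positive. -/
open Finset

def sigma1 (l : Fin 4 → ℝ) : ℝ := ∑ i, l i

def sigma2 (l : Fin 4 → ℝ) : ℝ :=
  ∑ i, ∑ j ∈ Finset.univ.filter (fun j => i < j), l i * l j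

lemma T1_pos (l : Fin 4 → ℝ) (h2 : 0 < sigma2 l) (h1 : 0 < sigma1 l)
    (i : Fin 4) : 0 < sigma1 l - l i := by
  have e1 : sigma1 l = l 0 + l 1 + l 2 + l 3 := by
    simp [sigma1, Fin.sum_univ_four]
  have e2 : sigma2 l = l 0 * l 1 + l 0 * l 2 + l 0 * l 3 + l 1 * l 2 + l 1 * l 3 + l 2 * l 3 := by
    simp [sigma2, Finset.sum_filter, Fin.sum_univ_four]
    ring
  rw [e1] at h1 ⊢
  rw [e2] at h2
  fin_cases i <;> simp <;>
    nlinarith [sq_nonneg (l 0), sq_nonneg (l 1), sq_nonneg (l 2), sq_nonneg (l 3),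
      sq_nonneg (l 0 + l 1 + l 2 + l 3)]

/-- For λ ∈ Γ₂⁺ and t ≤ 1, the transformation L^t(λ) with eigenvalues
(σ₁(λ) − λᵢ) + ((1−t)/2)·Σⱼ(σ₁(λ) − λⱼ) is positive definite. -/
theorem Lt_pos (l : Fin 4 → ℝ) (t : ℝ) (ht : t ≤ 1)
    (h2 : 0 < sigma2 l) (h1 : 0 < sigma1 l) :
    ∀ i : Fin 4, 0 < (sigma1 l - l i) + (1 - t) / 2 * ∑ j, (sigma1 l - l j) := by
  intro i
  have hi := T1_pos l h2 h1 i
  have hsum : ∑ j, (sigma1 l - l j) = 3 * sigma1 l := by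
    simp [Fin.sum_univ_four, sigma1]; ring
  rw [hsum]
  have hc : 0 ≤ (1 - t) / 2 := by linarith
  nlinarith [mul_nonneg hc (le_of_lt (by linarith : (0:ℝ) < 3 * sigma1 l))]
end

section
/- The map λ ↦ σ₂(λ)^{1/2} is concave on the cone Γ₂⁺ ⊂ ℝ⁴: for λ, μ ∈ Γ₂⁺ and s ∈ [0,1], σ₂((1−s)λ + sμ)^{1/2} ≥ (1−s)·σ₂(λ)^{1/2} + s·σ₂(μ)^{1/2}. -/
open Finset

lemma sigma2_eq (l : Fin 4 → ℝ) :
    sigma2 l = l 0 * l 1 + l 0 * l 2 + l 0 * l 3 + l 1 * l 2 + l 1 * l 3 + l 2 * l 3 := by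
  simp [sigma2, Fin.sum_univ_four, Finset.sum_filter]
  ring

lemma sigma1_eq (l : Fin 4 → ℝ) : sigma1 l = l 0 + l 1 + l 2 + l 3 := by
  simp [sigma1, Fin.sum_univ_four]

lemma aux_sqrt (A C Sl Sm B c s : ℝ) (hs0 : 0 ≤ s) (hs1 : s ≤ 1)
    (hA : 0 < A) (hC : 0 < C) (hSl : 0 < Sl) (hSm : 0 < Sm)
    (hkey : Sm ^ 2 * A + Sl ^ 2 * C ≤ Sl * Sm * B)
    (hquad : c = (1 - s) ^ 2 * A + s * (1 - s) * B + s ^ 2 * C) :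
    0 < c ∧ (1 - s) * Real.sqrt A + s * Real.sqrt C ≤ Real.sqrt c := by
  set x := Real.sqrt A with hx
  set y := Real.sqrt C with hy
  have hx2 : x ^ 2 = A := Real.sq_sqrt hA.le
  have hy2 : y ^ 2 = C := Real.sq_sqrt hC.le
  have hxpos : 0 < x := Real.sqrt_pos.2 hA
  have hypos : 0 < y := Real.sqrt_pos.2 hC
  have hB : 2 * x * y ≤ B := by
    have hamgm : 2 * (Sl * Sm) * (x * y) ≤ Sm ^ 2 * A + Sl ^ 2 * C := by
      nlinarith [sq_nonneg (Sm * x - Sl * y), hx2, hy2]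
    have hpos : 0 < Sl * Sm := mul_pos hSl hSm
    nlinarith [hkey, hamgm]
  have hs1' : 0 ≤ 1 - s := by linarith
  have hBnn : 0 ≤ B := le_trans (by positivity) hB
  have hsq : ((1 - s) * x + s * y) ^ 2 ≤ c := by
    rw [hquad]
    have h := mul_le_mul_of_nonneg_left hB (mul_nonneg hs0 hs1')
    nlinarith [h, hx2, hy2]
  have hc : 0 < c := by
    rcases eq_or_lt_of_le hs1 with h | h
    · rw [hquad, h]; norm_num; exact hC
    · have h1 : 0 < (1 - s) ^ 2 * A := by
        have : 0 < 1 - s := by linarith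
        positivity
      have h2 : 0 ≤ s * (1 - s) * B := by
        apply mul_nonneg (mul_nonneg hs0 hs1') hBnn
      have h3 : 0 ≤ s ^ 2 * C := by positivity
      rw [hquad]; linarith
  refine ⟨hc, ?_⟩
  have hLHS : 0 ≤ (1 - s) * x + s * y := by positivity
  calc (1 - s) * x + s * y = Real.sqrt (((1 - s) * x + s * y) ^ 2) :=
        (Real.sqrt_sq hLHS).symm
    _ ≤ Real.sqrt c := Real.sqrt_le_sqrt hsq

/-- σ₂^{1/2} is concave on Γ₂⁺: first, convex combinations stay in Γ₂⁺, and the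
square root of σ₂ is superadditive along segments. -/
theorem sigma2_sqrt_concave (l m : Fin 4 → ℝ) (s : ℝ) (hs0 : 0 ≤ s) (hs1 : s ≤ 1)
    (hl2 : 0 < sigma2 l) (hl1 : 0 < sigma1 l)
    (hm2 : 0 < sigma2 m) (hm1 : 0 < sigma1 m) :
    (0 < sigma2 ((1 - s) • l + s • m) ∧ 0 < sigma1 ((1 - s) • l + s • m)) ∧
    (1 - s) * Real.sqrt (sigma2 l) + s * Real.sqrt (sigma2 m) ≤
      Real.sqrt (sigma2 ((1 - s) • l + s • m)) := by
  obtain ⟨B, hBdef⟩ : ∃ B : ℝ, B = sigma2 (l + m) - sigma2 l - sigma2 m := ⟨_, rfl⟩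
  have hkey : sigma1 m ^ 2 * sigma2 l + sigma1 l ^ 2 * sigma2 m ≤ sigma1 l * sigma1 m * B := by
    have hid : sigma1 l * sigma1 m * B - (sigma1 m ^ 2 * sigma2 l + sigma1 l ^ 2 * sigma2 m) =
        ((sigma1 m * l 0 - sigma1 l * m 0) ^ 2 + (sigma1 m * l 1 - sigma1 l * m 1) ^ 2 +
         (sigma1 m * l 2 - sigma1 l * m 2) ^ 2 + (sigma1 m * l 3 - sigma1 l * m 3) ^ 2) / 2 := by
      rw [hBdef]
      simp only [sigma2_eq, sigma1_eq, Pi.add_apply]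
      ring
    have h0 := sq_nonneg (sigma1 m * l 0 - sigma1 l * m 0)
    have h1 := sq_nonneg (sigma1 m * l 1 - sigma1 l * m 1)
    have h2 := sq_nonneg (sigma1 m * l 2 - sigma1 l * m 2)
    have h3 := sq_nonneg (sigma1 m * l 3 - sigma1 l * m 3)
    linarith
  have hquad : sigma2 ((1 - s) • l + s • m) =
      (1 - s) ^ 2 * sigma2 l + s * (1 - s) * B + s ^ 2 * sigma2 m := by
    rw [hBdef]
    simp only [sigma2_eq, Pi.add_apply, Pi.smul_apply, smul_eq_mul]
    ring
  have hsum1 : 0 < sigma1 ((1 - s) • l + s • m) := by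
    have heq : sigma1 ((1 - s) • l + s • m) = (1 - s) * sigma1 l + s * sigma1 m := by
      simp only [sigma1_eq, Pi.add_apply, Pi.smul_apply, smul_eq_mul]; ring
    rw [heq]
    rcases eq_or_lt_of_le hs1 with h | h
    · rw [h]; norm_num; exact hm1
    · have h1 : 0 < (1 - s) * sigma1 l := mul_pos (by linarith) hl1
      have h2 : 0 ≤ s * sigma1 m := mul_nonneg hs0 hm1.le
      linarith
  obtain ⟨hc, hle⟩ := aux_sqrt (sigma2 l) (sigma2 m) (sigma1 l) (sigma1 m) B
    (sigma2 ((1 - s) • l + s • m)) s hs0 hs1 hl2 hm2 hl1 hm1 hkey hquad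
  exact ⟨⟨hc, hsum1⟩, hle⟩
end

section
/- Let A be a symmetric endomorphism of an n-dimensional inner product space (n ≥ 2) whose eigenvalues lie in Γ₂⁺ (i.e., σ₂(A) > 0 and σ₁(A) > 0). Then −A + σ₁(A)·I > 0 and A + ((n−2)/n)·σ₁(A)·I > 0 (both positive definite). -/
open Matrix

/-- σ₂(A) = (1/2)((tr A)² − tr(A²)) for an n×n matrix. -/
noncomputable def sigma2M {n : ℕ} (A : Matrix (Fin n) (Fin n) ℝ) : ℝ :=
  ((Matrix.trace A) ^ 2 - Matrix.trace (A * A)) / 2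

/-- Conjugation of a positive definite matrix by a unitary matrix is positive definite. -/
lemma posDef_unitary_conj {n : ℕ} {U : Matrix (Fin n) (Fin n) ℝ}
    (hU : U ∈ Matrix.unitaryGroup (Fin n) ℝ) {D : Matrix (Fin n) (Fin n) ℝ}
    (hD : D.PosDef) : (U * D * star U).PosDef := by
  have hUU : U * star U = 1 := (Matrix.mem_unitaryGroup_iff).mp hU
  refine Matrix.PosDef.of_dotProduct_mulVec_pos ?_ ?_
  · show (U * D * star U)ᴴ = U * D * star U
    have : (star U : Matrix (Fin n) (Fin n) ℝ) = Uᴴ := rfl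
    rw [this]
    rw [Matrix.conjTranspose_mul, Matrix.conjTranspose_mul, Matrix.conjTranspose_conjTranspose,
      hD.1.eq, Matrix.mul_assoc]
  · intro x hx
    have hy : (star U) *ᵥ x ≠ 0 := by
      intro h
      apply hx
      have := congrArg (fun v => U *ᵥ v) h
      simpa [Matrix.mulVec_mulVec, hUU] using this
    have hv : star x ᵥ* U = star ((star U) *ᵥ x) := by
      ext i
      simp [Matrix.vecMul, Matrix.mulVec, dotProduct, Matrix.conjTranspose_apply,
        mul_comm]
    have key : dotProduct (star x) ((U * D * star U) *ᵥ x)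
        = dotProduct (star ((star U) *ᵥ x)) (D *ᵥ ((star U) *ᵥ x)) := by
      conv_lhs => rw [← Matrix.mulVec_mulVec, ← Matrix.mulVec_mulVec,
        dotProduct_mulVec, hv]
    rw [key]
    exact hD.dotProduct_mulVec_pos hy

/-- Key scalar fact: if `s > 0` and `∑ μ i ^ 2 < s ^ 2`, then each `μ i < s`. -/
lemma each_lt {n : ℕ} (μ : Fin n → ℝ) (s : ℝ) (hs : 0 < s)
    (h : ∑ i, μ i ^ 2 < s ^ 2) (i : Fin n) : μ i < s := by
  have h1 : μ i ^ 2 ≤ ∑ j, μ j ^ 2 :=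
    Finset.single_le_sum (fun j _ => sq_nonneg (μ j)) (Finset.mem_univ i)
  have h2 : μ i ^ 2 < s ^ 2 := lt_of_le_of_lt h1 h
  nlinarith [abs_lt_of_sq_lt_sq' h2 hs.le]

/-- If the eigenvalues of a symmetric endomorphism A (n ≥ 2) lie in Γ₂⁺, then
−A + σ₁(A)·I and A + ((n−2)/n)·σ₁(A)·I are both positive definite. -/
theorem gammaTwo_posdef (n : ℕ) (hn : 2 ≤ n) (A : Matrix (Fin n) (Fin n) ℝ)
    (hA : A.IsSymm) (h2 : 0 < sigma2M A) (h1 : 0 < Matrix.trace A) :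
    ((Matrix.trace A) • (1 : Matrix (Fin n) (Fin n) ℝ) - A).PosDef ∧
    (A + (((n : ℝ) - 2) / n * Matrix.trace A) • (1 : Matrix (Fin n) (Fin n) ℝ)).PosDef := by
  have hH : A.IsHermitian := by
    ext i j
    simp only [Matrix.conjTranspose_apply, star_trivial]
    exact congrFun (congrFun hA i) j
  set U : Matrix (Fin n) (Fin n) ℝ := (hH.eigenvectorUnitary : Matrix (Fin n) (Fin n) ℝ) with hU
  have hUmem : U ∈ Matrix.unitaryGroup (Fin n) ℝ := hH.eigenvectorUnitary.2
  have hUU : U * star U = 1 := (Matrix.mem_unitaryGroup_iff).mp hUmem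
  have hUU' : star U * U = 1 := (Matrix.mem_unitaryGroup_iff').mp hUmem
  set lam : Fin n → ℝ := hH.eigenvalues with hlam
  have hdiag : (RCLike.ofReal ∘ hH.eigenvalues : Fin n → ℝ) = lam := by
    funext i; simp [hlam]
  have hspec : A = U * Matrix.diagonal lam * star U := by
    have := hH.spectral_theorem
    rw [hdiag] at this
    exact this
  -- trace A = sum of eigenvalues
  set s : ℝ := Matrix.trace A with hs
  have htr : s = ∑ i, lam i := by
    rw [hs, hspec, Matrix.trace_mul_comm, ← Matrix.mul_assoc, hUU', Matrix.one_mul,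
      Matrix.trace_diagonal]
  -- trace (A*A) = sum of squares of eigenvalues
  have htr2 : Matrix.trace (A * A) = ∑ i, lam i ^ 2 := by
    have : A * A = U * (Matrix.diagonal lam * Matrix.diagonal lam) * star U := by
      rw [hspec]
      simp only [Matrix.mul_assoc]
      rw [← Matrix.mul_assoc (star U) U, hUU', Matrix.one_mul]
    rw [this, Matrix.trace_mul_comm, ← Matrix.mul_assoc, hUU', Matrix.one_mul,
      Matrix.diagonal_mul_diagonal, Matrix.trace_diagonal]
    exact Finset.sum_congr rfl (fun i _ => (sq (lam i)).symm)
  have hsum_sq : ∑ i, lam i ^ 2 < s ^ 2 := by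
    have := h2
    unfold sigma2M at this
    rw [htr2] at this
    linarith
  -- each eigenvalue < s
  have hlt : ∀ i, lam i < s := each_lt lam s h1 hsum_sq
  -- reflected eigenvalues
  have hnpos : (0 : ℝ) < n := by positivity
  have hnne : (n : ℝ) ≠ 0 := ne_of_gt hnpos
  set mu : Fin n → ℝ := fun i => 2 * s / n - lam i with hmu
  have hmusum : ∑ i, mu i ^ 2 = ∑ i, lam i ^ 2 := by
    have expand : ∀ i, mu i ^ 2 = (2 * s / n) ^ 2 - 2 * (2 * s / n) * lam i + lam i ^ 2 := by
      intro i; rw [hmu]; ring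
    rw [Finset.sum_congr rfl (fun i _ => expand i)]
    rw [Finset.sum_add_distrib, Finset.sum_sub_distrib, Finset.sum_const, ← Finset.mul_sum,
      ← htr]
    simp only [Finset.card_univ, Fintype.card_fin, nsmul_eq_mul]
    field_simp
    ring
  have hmult : ∀ i, mu i < s := each_lt mu s h1 (by rw [hmusum]; exact hsum_sq)
  -- eigenvalue bounds for second matrix
  have hlb : ∀ i, 0 < lam i + ((n : ℝ) - 2) / n * s := by
    intro i
    have := hmult i
    rw [hmu] at this
    have h' : 2 * s / n - s < lam i := by linarith
    have : ((n : ℝ) - 2) / n * s = s - 2 * s / n := by field_simp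
    rw [this]; linarith
  constructor
  · -- s • 1 - A = U * diagonal (fun i => s - lam i) * star U
    have heq : s • (1 : Matrix (Fin n) (Fin n) ℝ) - A
        = U * Matrix.diagonal (fun i => s - lam i) * star U := by
      have hd : Matrix.diagonal (fun i => s - lam i)
          = s • (1 : Matrix (Fin n) (Fin n) ℝ) - Matrix.diagonal lam := by
        ext i j
        by_cases h : i = j <;> simp [Matrix.diagonal, Matrix.one_apply, h]
      rw [hd, Matrix.mul_sub, Matrix.sub_mul, ← hspec]
      congr 1
      rw [Matrix.mul_smul, Matrix.mul_one, Matrix.smul_mul, hUU]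
    rw [heq]
    exact posDef_unitary_conj hUmem (Matrix.PosDef.diagonal (fun i => by
      have := hlt i; simpa using sub_pos.mpr this))
  · have heq : A + (((n : ℝ) - 2) / n * s) • (1 : Matrix (Fin n) (Fin n) ℝ)
        = U * Matrix.diagonal (fun i => lam i + ((n : ℝ) - 2) / n * s) * star U := by
      have hd : Matrix.diagonal (fun i => lam i + ((n : ℝ) - 2) / n * s)
          = Matrix.diagonal lam + (((n : ℝ) - 2) / n * s) • (1 : Matrix (Fin n) (Fin n) ℝ) := by
        ext i j
        by_cases h : i = j <;> simp [Matrix.diagonal, Matrix.one_apply, h]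
      rw [hd, Matrix.mul_add, Matrix.add_mul, ← hspec]
      congr 1
      rw [Matrix.mul_smul, Matrix.mul_one, Matrix.smul_mul, hUU]
    rw [heq]
    exact posDef_unitary_conj hUmem (Matrix.PosDef.diagonal hlb)
end
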